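/- arXiv:1208.3024 — 8 statements merged into one kernel-verified Lean document; each statement's English description precedes it below -/
import Mathlib

section
/- Let S ≥ 0 be a real number, and set C = (1/2)·log₂(1 + S). Then (1/2)·log₂(1 + S) − (1/2)·log₂[(1 + S)/(1 + 2^{−2C}·S)] = (1/2)·log₂(1 + S/(1 + S)) ≤ 1/2. That is, when the backhaul capacity equals (1/2)log₂(1 + S), the per-base-station SIC rate is within half a bit of its unlimited-backhaul limit (1/2)log₂(1 + S). -/
/-- When the backhaul capacity equals `(1/2) log₂ (1 + S)`, the per-base-station SIC
rate is within half a bit of its unlimited-backhaul limit `(1/2) log₂ (1 + S)`. -/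
theorem half_bit_gap_at_nominal_backhaul (S : ℝ) (hS : 0 ≤ S) :
    let C := (1 / 2) * Real.logb 2 (1 + S)
    (1 / 2) * Real.logb 2 (1 + S)
        - (1 / 2) * Real.logb 2 ((1 + S) / (1 + (2 : ℝ) ^ (-(2 * C)) * S))
      = (1 / 2) * Real.logb 2 (1 + S / (1 + S)) ∧
    (1 / 2) * Real.logb 2 (1 + S / (1 + S)) ≤ 1 / 2 := by
  intro C
  have h1S : (0:ℝ) < 1 + S := by linarith
  have hC : (2:ℝ) ^ (-(2 * C)) = (1 + S)⁻¹ := by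
    have : -(2 * C) = -Real.logb 2 (1 + S) := by
      simp only [C]; ring
    rw [this, Real.rpow_neg (by norm_num), Real.rpow_logb (by norm_num) (by norm_num) h1S]
  have hpos : (0:ℝ) < 1 + S / (1 + S) := by positivity
  constructor
  · rw [hC]
    have : (1 + S)⁻¹ * S = S / (1 + S) := by ring
    rw [this, Real.logb_div (ne_of_gt h1S) (ne_of_gt hpos)]
    ring
  · have h2 : 1 + S / (1 + S) ≤ 2 := by
      have : S / (1 + S) ≤ 1 := by
        rw [div_le_one h1S]; linarith
      linarith
    have := Real.logb_le_logb_of_le (b := 2) (by norm_num) hpos h2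
    simp at this
    linarith
end

section
/- Fix an integer L ≥ 1, an index k ∈ {1,…,L}, real channel gains h_{jk} for j = 1,…,L, powers P_j ≥ 0, noise level N₀ > 0, and C > 0. Define q' = (N₀ + Σ_{j=1}^{L} h_{jk}²P_j)/(2^{2C} − 1) and S' = h_{kk}²P_k/(N₀ + Σ_{j>k} h_{jk}²P_j + 2^{−2C}·Σ_{j<k} h_{jk}²P_j). Then (1/2)·log₂[(q' + N₀ + Σ_{j≥k} h_{jk}²P_j)/(q' + N₀ + Σ_{j>k} h_{jk}²P_j)] = (1/2)·log₂[(1 + S')/(1 + 2^{−2C}·S')]. (This is the simplified rate expression of the per-base-station SIC scheme without Wyner-Ziv coding, Theorem 2 of the paper.) -/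
/-!
Write `t = 2^{2C}`, `s = h_{kk}² P_k`, and `D = N₀ + Σ_{j>k} h_{jk}² P_j + t⁻¹ Σ_{j<k} h_{jk}² P_j`,
so that `S' = s / D`. Since `q' (t - 1)` is the noise plus total power received at base-station `k`,
clearing the denominator `t - 1` turns the ratio inside the rate into `(t D + t s) / (t D + s)`,
and so does clearing `D` in `(1 + S') / (1 + S' / t)`.
-/

open Finset in
theorem Finset.sum_Ico_add_sum_Icc {α M : Type*} [LinearOrder α] [LocallyFiniteOrder α]
    [AddCommMonoid M] (f : α → M) {a b c : α} (hab : a ≤ b) (hbc : b ≤ c) :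
    ∑ x ∈ Ico a b, f x + ∑ x ∈ Icc b c, f x = ∑ x ∈ Icc a c, f x := by
  have hunion : Ico a b ∪ Icc b c = Icc a c := by
    rw [← coe_inj, coe_union, coe_Ico, coe_Icc, coe_Icc, Set.Ico_union_Icc_eq_Icc hab hbc]
  rw [← hunion, sum_union <| disjoint_left.2 fun x hx hx' =>
    (mem_Ico.1 hx).2.not_ge (mem_Icc.1 hx').1]

theorem sic_rate_ratio_eq {N B s T t : ℝ} (ht₀ : t ≠ 0) (ht₁ : t ≠ 1)
    (hD : N + T + t⁻¹ * B ≠ 0) :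
    ((N + (B + (s + T))) / (t - 1) + N + (s + T)) / ((N + (B + (s + T))) / (t - 1) + N + T) =
      (1 + s / (N + T + t⁻¹ * B)) / (1 + t⁻¹ * (s / (N + T + t⁻¹ * B))) := by
  have ht : t - 1 ≠ 0 := sub_ne_zero.2 ht₁
  have htD : t * (N + T) + B ≠ 0 := by
    rw [show t * (N + T) + B = t * (N + T + t⁻¹ * B) by field_simp]
    exact mul_ne_zero ht₀ hD
  calc _ = (t * (N + T) + B + t * s) / (t * (N + T) + B + s) := by
        simp only [div_add' _ _ _ ht, div_div_div_cancel_right₀ ht]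
        congr 1 <;> ring
    _ = _ := by field_simp

theorem per_base_station_SIC_no_WZ_rate_general (L : ℕ) (k : ℕ)
    (hk : k ∈ Finset.Icc 1 L) (h P : ℕ → ℝ) (hP : ∀ j, 0 ≤ P j)
    (N0 : ℝ) (hN0 : 0 < N0) (C : ℝ) (hC : 0 < C) :
    let q' := (N0 + ∑ j ∈ Finset.Icc 1 L, (h j) ^ 2 * P j) / ((2 : ℝ) ^ (2 * C) - 1)
    let S' := (h k) ^ 2 * P k /
      (N0 + (∑ j ∈ Finset.Ioc k L, (h j) ^ 2 * P j)
        + (2 : ℝ) ^ (-(2 * C)) * ∑ j ∈ Finset.Ico 1 k, (h j) ^ 2 * P j)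
    (1 / 2) * Real.logb 2
        ((q' + N0 + ∑ j ∈ Finset.Icc k L, (h j) ^ 2 * P j) /
          (q' + N0 + ∑ j ∈ Finset.Ioc k L, (h j) ^ 2 * P j))
      = (1 / 2) * Real.logb 2 ((1 + S') / (1 + (2 : ℝ) ^ (-(2 * C)) * S')) := by
  intro q' S'
  obtain ⟨hk₁, hkL⟩ := Finset.mem_Icc.mp hk
  have hsum_from_k := (Finset.add_sum_Ioc_eq_sum_Icc (f := fun j => h j ^ 2 * P j) hkL).symm
  have hsum_all := (Finset.sum_Ico_add_sum_Icc (fun j => h j ^ 2 * P j) hk₁ hkL).symm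
  rw [hsum_from_k] at hsum_all
  have hpower : ∀ s : Finset ℕ, 0 ≤ ∑ j ∈ s, h j ^ 2 * P j := fun s =>
    Finset.sum_nonneg fun j _ => mul_nonneg (sq_nonneg _) (hP j)
  have h2C : 1 < (2 : ℝ) ^ (2 * C) := Real.one_lt_rpow one_lt_two (by positivity)
  have hD : 0 < N0 + ∑ j ∈ Finset.Ioc k L, h j ^ 2 * P j +
      ((2 : ℝ) ^ (2 * C))⁻¹ * ∑ j ∈ Finset.Ico 1 k, h j ^ 2 * P j := by
    have := hpower (Finset.Ioc k L); have := hpower (Finset.Ico 1 k); positivity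
  simp only [q', S', hsum_from_k, hsum_all, Real.rpow_neg zero_le_two]
  rw [sic_rate_ratio_eq (by positivity) h2C.ne' hD.ne']

/-- Theorem 2 of the paper: simplified rate expression of the per-base-station SIC
scheme without Wyner-Ziv coding. Here `h j` is the channel gain `h_{jk}` from user `j`
to base-station `k`, `P j` is the power of user `j`, `N0` the noise level, and `C` the
backhaul capacity of base-station `k`. -/
theorem per_base_station_SIC_no_WZ_rate (L : ℕ) (hL : 1 ≤ L) (k : ℕ)
    (hk : k ∈ Finset.Icc 1 L) (h P : ℕ → ℝ) (hP : ∀ j, 0 ≤ P j)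
    (N0 : ℝ) (hN0 : 0 < N0) (C : ℝ) (hC : 0 < C) :
    let q' := (N0 + ∑ j ∈ Finset.Icc 1 L, (h j) ^ 2 * P j) / ((2 : ℝ) ^ (2 * C) - 1)
    let S' := (h k) ^ 2 * P k /
      (N0 + (∑ j ∈ Finset.Ioc k L, (h j) ^ 2 * P j)
        + (2 : ℝ) ^ (-(2 * C)) * ∑ j ∈ Finset.Ico 1 k, (h j) ^ 2 * P j)
    (1 / 2) * Real.logb 2
        ((q' + N0 + ∑ j ∈ Finset.Icc k L, (h j) ^ 2 * P j) /
          (q' + N0 + ∑ j ∈ Finset.Ioc k L, (h j) ^ 2 * P j))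
      = (1 / 2) * Real.logb 2 ((1 + S') / (1 + (2 : ℝ) ^ (-(2 * C)) * S')) :=
  per_base_station_SIC_no_WZ_rate_general L k hk h P hP N0 hN0 C hC
end

section
/- Let S, I, C be real numbers with 0 ≤ I ≤ S and C ≥ 0. Then (1/2)·log₂[(1 + S)/(1 + 2^{−2C}·S)] − (1/2)·log₂[(1 + 2^{−2C}·I + S)/(1 + 2^{−2C}·I + 2^{−2C}·S)] ≤ 1/2. That is, in the weak-interference regime INR ≤ SNR, the per-user achievable rate of the per-base-station SIC scheme without Wyner-Ziv coding is within half a bit of the rate with Wyner-Ziv coding. -/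
/-- In the weak-interference regime `INR ≤ SNR`, the per-user achievable rate of the
per-base-station SIC scheme without Wyner-Ziv coding is within half a bit of the rate
with Wyner-Ziv coding. Here `S` is the SNR and `I` the INR. -/
theorem no_WZ_within_half_bit_of_WZ (S I C : ℝ) (hI : 0 ≤ I) (hIS : I ≤ S) (hC : 0 ≤ C) :
    (1 / 2) * Real.logb 2 ((1 + S) / (1 + (2 : ℝ) ^ (-(2 * C)) * S))
        - (1 / 2) * Real.logb 2
            ((1 + (2 : ℝ) ^ (-(2 * C)) * I + S) /
              (1 + (2 : ℝ) ^ (-(2 * C)) * I + (2 : ℝ) ^ (-(2 * C)) * S))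
      ≤ 1 / 2 := by
  set a : ℝ := (2 : ℝ) ^ (-(2 * C)) with ha_def
  have ha : 0 < a := Real.rpow_pos_of_pos (by norm_num) _
  have ha1 : a ≤ 1 :=
    Real.rpow_le_one_of_one_le_of_nonpos (by norm_num) (by linarith)
  have hS : 0 ≤ S := le_trans hI hIS
  have hA : (0:ℝ) < 1 + S := by linarith
  have hB : (0:ℝ) < 1 + a * S := by nlinarith
  have hA' : (0:ℝ) < 1 + a * I + S := by nlinarith
  have hB' : (0:ℝ) < 1 + a * I + a * S := by nlinarith
  have hq1 : (0:ℝ) < (1 + S) / (1 + a * S) := div_pos hA hB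
  have hq2 : (0:ℝ) < (1 + a * I + S) / (1 + a * I + a * S) := div_pos hA' hB'
  -- key: ratio ≤ 2
  have hkey : (1 + S) / (1 + a * S) ≤ 2 * ((1 + a * I + S) / (1 + a * I + a * S)) := by
    rw [div_le_iff₀ hB]
    have h2 : (1 + S) * (1 + a * I + a * S) ≤ 2 * (1 + a * I + S) * (1 + a * S) := by
      nlinarith [mul_nonneg (mul_nonneg ha.le (sub_nonneg.2 hIS)) hS,
        mul_nonneg (mul_nonneg (mul_nonneg ha.le ha.le) hI) hS,
        mul_nonneg ha.le (mul_nonneg hS hS), mul_nonneg ha.le hI]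
    calc 1 + S = ((1 + S) * (1 + a * I + a * S)) / (1 + a * I + a * S) := by
          field_simp
      _ ≤ (2 * (1 + a * I + S) * (1 + a * S)) / (1 + a * I + a * S) :=
          div_le_div_of_nonneg_right h2 hB'.le |>.trans_eq rfl
      _ = 2 * ((1 + a * I + S) / (1 + a * I + a * S)) * (1 + a * S) := by ring
  have hlog : Real.logb 2 ((1 + S) / (1 + a * S))
      ≤ Real.logb 2 ((1 + a * I + S) / (1 + a * I + a * S)) + 1 := by
    have := Real.logb_le_logb_of_le (b := 2) (by norm_num) hq1 hkey
    rw [Real.logb_mul (by norm_num) (ne_of_gt hq2)] at this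
    simpa [Real.logb_self_eq_one, add_comm] using this
  linarith
end

section
/- Let L ≥ 1 be an integer, and let real numbers SNR_i ≥ 0 and C_i ≥ 0 for i = 1,…,L, and INR_i for i = 1,…,L−1 with 0 ≤ INR_i ≤ SNR_i, be given; set INR_L = 0. Define the cut-set upper bound U = min over all subsets S ⊆ {1,…,L} of [ Σ_{i ∉ S} (1/2)·log₂(1 + SNR_i + INR_i) + Σ_{i ∈ S} C_i ], and the achievable sum rate R = Σ_{i=1}^{L−1} (1/2)·log₂[(1 + SNR_i)/(1 + 2^{−2C_i}·SNR_i)] + min{ (1/2)·log₂(1 + SNR_L), C_L }. Then U − R ≤ L − 1/2. (This is the constant-gap optimality of per-base-station SIC with Wyner-Ziv coding for the Wyner model, Theorem 3 of the paper.) -/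
/-!
Take the cut `S = {i | C i ≤ ½ log₂ (1 + SNR i + INR i)}`: the cut-set bound is then at most
`∑ i, min (½ log₂ (1 + SNR i + INR i)) (C i)`. Weak interference costs at most half a bit per
cell, `log₂ (1 + SNR + INR) ≤ log₂ (1 + SNR) + 1`, and Wyner-Ziv quantization loses at most
another half bit against `min (½ log₂ (1 + SNR)) C`, because with `x = 2^(2C)` the rate is
`½ log₂ (x (1 + SNR) / (x + SNR))` and `x + SNR ≤ 2 max x (1 + SNR)`. Cell `L` sees no
interference and its rate is exactly that minimum, so the gap is at most `L - 1`.
-/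

open Real Finset

theorem Finset.inf'_powerset_sum_sdiff_add_sum_le_sum_min {ι α : Type*}
    [AddCommMonoid α] [LinearOrder α] [IsOrderedAddMonoid α] [DecidableEq ι]
    (T : Finset ι) (a c : ι → α) :
    T.powerset.inf' T.powerset_nonempty (fun s => ∑ i ∈ T \ s, a i + ∑ i ∈ s, c i)
      ≤ ∑ i ∈ T, min (a i) (c i) := by
  let S := T.filter (fun i => c i ≤ a i)
  calc _ ≤ ∑ i ∈ T \ S, a i + ∑ i ∈ S, c i :=
        inf'_le _ (mem_powerset.2 (filter_subset _ _))
    _ = ∑ i ∈ T, min (a i) (c i) := by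
        rw [← sum_filter_add_sum_filter_not T (fun i => c i ≤ a i), add_comm, filter_not]
        congr 1
        · exact sum_congr rfl fun i hi => (min_eq_right (mem_filter.1 hi).2).symm
        · refine sum_congr rfl fun i hi => (min_eq_left ?_).symm
          obtain ⟨hiT, hiS⟩ := mem_sdiff.1 hi
          exact le_of_not_ge fun h => hiS (mem_filter.2 ⟨hiT, h⟩)

theorem Real.logb_two_add_le {a b : ℝ} (ha : 0 < a) (hb : 0 ≤ b) (hba : b ≤ a) :
    logb 2 (a + b) ≤ logb 2 a + 1 := by
  calc logb 2 (a + b) ≤ logb 2 (2 * a) := logb_le_logb_of_le one_lt_two (by linarith) (by linarith)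
    _ = logb 2 a + 1 := by
        rw [logb_mul two_ne_zero ha.ne', logb_self_eq_one one_lt_two, add_comm]

theorem Real.min_logb_le_logb_two_mul {x s : ℝ} (hx : 0 < x) (hs : 0 ≤ s) :
    min (logb 2 (1 + s)) (logb 2 x) ≤ logb 2 (2 * (x * (1 + s) / (x + s))) := by
  have hxs : 0 < x + s := by linarith
  rcases le_total x (1 + s) with h | h
  · refine min_le_of_right_le (logb_le_logb_of_le one_lt_two hx ?_)
    rw [mul_div_assoc', le_div_iff₀ hxs]
    nlinarith
  · refine min_le_of_left_le (logb_le_logb_of_le one_lt_two (by linarith) ?_)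
    rw [mul_div_assoc', le_div_iff₀ hxs]
    nlinarith

noncomputable def wynerZivRate (snr c : ℝ) : ℝ :=
  1 / 2 * logb 2 ((1 + snr) / (1 + (2 : ℝ) ^ (-(2 * c)) * snr))

theorem min_half_logb_le_wynerZivRate_add_half {s : ℝ} (hs : 0 ≤ s) (c : ℝ) :
    min (1 / 2 * logb 2 (1 + s)) c ≤ wynerZivRate s c + 1 / 2 := by
  set x : ℝ := 2 ^ (2 * c)
  have hx : 0 < x := by positivity
  have hc : logb 2 x = 2 * c := by simp [x, logb_rpow]
  have hratio : (1 + s) / (1 + (2 : ℝ) ^ (-(2 * c)) * s) = x * (1 + s) / (x + s) := by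
    rw [rpow_neg zero_le_two]
    field_simp
    simp only [x]
    ring
  have hpos : 0 < x * (1 + s) / (x + s) := by positivity
  have key := min_logb_le_logb_two_mul hx hs
  rw [hc, logb_mul two_ne_zero hpos.ne', logb_self_eq_one one_lt_two] at key
  rw [wynerZivRate, hratio]
  rcases min_le_iff.1 key with h | h
  · exact min_le_of_left_le (by linarith)
  · exact min_le_of_right_le (by linarith)

theorem min_half_logb_le_wynerZivRate_add_one {s inr : ℝ} (hs : 0 ≤ s) (hinr : 0 ≤ inr)
    (hinrs : inr ≤ s) (c : ℝ) :
    min (1 / 2 * logb 2 (1 + s + inr)) c ≤ wynerZivRate s c + 1 := by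
  have hinterference : 1 / 2 * logb 2 (1 + s + inr) ≤ 1 / 2 * logb 2 (1 + s) + 1 / 2 := by
    linarith [logb_two_add_le (a := 1 + s) (by linarith) hinr (by linarith)]
  calc min (1 / 2 * logb 2 (1 + s + inr)) c
      ≤ min (1 / 2 * logb 2 (1 + s) + 1 / 2) (c + 1 / 2) := min_le_min hinterference (by linarith)
    _ = min (1 / 2 * logb 2 (1 + s)) c + 1 / 2 := min_add_add_right _ _ _
    _ ≤ wynerZivRate s c + 1 := by linarith [min_half_logb_le_wynerZivRate_add_half hs c]

theorem per_BS_SIC_WZ_constant_gap_Wyner_general (L : ℕ) (hL : 1 ≤ L)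
    (SNR INR C : ℕ → ℝ)
    (hSNR : ∀ i ∈ Finset.Icc 1 L, 0 ≤ SNR i)
    (hINR : ∀ i ∈ Finset.Ico 1 L, 0 ≤ INR i ∧ INR i ≤ SNR i)
    (hINRL : INR L = 0) :
    let U := (Finset.Icc 1 L).powerset.inf' (Finset.powerset_nonempty _)
      (fun s => (∑ i ∈ Finset.Icc 1 L \ s, (1 / 2) * Real.logb 2 (1 + SNR i + INR i))
        + ∑ i ∈ s, C i)
    let R := (∑ i ∈ Finset.Ico 1 L,
        (1 / 2) * Real.logb 2 ((1 + SNR i) / (1 + (2 : ℝ) ^ (-(2 * C i)) * SNR i)))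
      + min ((1 / 2) * Real.logb 2 (1 + SNR L)) (C L)
    U - R ≤ (L : ℝ) - 1 / 2 := by
  intro U R
  have hcut := inf'_powerset_sum_sdiff_add_sum_le_sum_min (Icc 1 L)
    (fun i => 1 / 2 * logb 2 (1 + SNR i + INR i)) C
  have hcells : ∑ i ∈ Ico 1 L, min (1 / 2 * logb 2 (1 + SNR i + INR i)) (C i)
      ≤ ∑ i ∈ Ico 1 L, (wynerZivRate (SNR i) (C i) + 1) :=
    sum_le_sum fun i hi => min_half_logb_le_wynerZivRate_add_one
      (hSNR i (Ico_subset_Icc_self hi)) (hINR i hi).1 (hINR i hi).2 (C i)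
  conv_rhs at hcut => rw [← Ico_insert_right hL, sum_insert right_notMem_Ico, hINRL, add_zero]
  rw [sum_add_distrib, sum_const, Nat.card_Ico, nsmul_one, Nat.cast_sub hL] at hcells
  simp only [U, R, wynerZivRate] at hcut hcells ⊢
  linarith

/-- Theorem 3 of the paper: in the Wyner soft-handoff model under weak interference
(`INR i ≤ SNR i`), the sum rate of the per-base-station SIC scheme with Wyner-Ziv coding
(decoding from user `L` down to user `1`, with base-station `L` using the better of
compress-and-forward and decode-and-forward) is within `L - 1/2` bits of the cut-set
upper bound on the sum capacity. -/
theorem per_BS_SIC_WZ_constant_gap_Wyner (L : ℕ) (hL : 1 ≤ L)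
    (SNR INR C : ℕ → ℝ)
    (hSNR : ∀ i ∈ Finset.Icc 1 L, 0 ≤ SNR i)
    (hC : ∀ i ∈ Finset.Icc 1 L, 0 ≤ C i)
    (hINR : ∀ i ∈ Finset.Ico 1 L, 0 ≤ INR i ∧ INR i ≤ SNR i)
    (hINRL : INR L = 0) :
    let U := (Finset.Icc 1 L).powerset.inf' (Finset.powerset_nonempty _)
      (fun s => (∑ i ∈ Finset.Icc 1 L \ s, (1 / 2) * Real.logb 2 (1 + SNR i + INR i))
        + ∑ i ∈ s, C i)
    let R := (∑ i ∈ Finset.Ico 1 L,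
        (1 / 2) * Real.logb 2 ((1 + SNR i) / (1 + (2 : ℝ) ^ (-(2 * C i)) * SNR i)))
      + min ((1 / 2) * Real.logb 2 (1 + SNR L)) (C L)
    U - R ≤ (L : ℝ) - 1 / 2 :=
  per_BS_SIC_WZ_constant_gap_Wyner_general L hL SNR INR C hSNR hINR hINRL
end

section
/- Let L ≥ 1 be an integer, and let real numbers SNR_i ≥ 0 and C_i ≥ 0 for i = 1,…,L, and INR_i for i = 1,…,L−1 with 0 ≤ INR_i ≤ SNR_i, be given; set INR_L = 0. Define U = min over all subsets S ⊆ {1,…,L} of [ Σ_{i ∉ S} (1/2)·log₂(1 + SNR_i + INR_i) + Σ_{i ∈ S} C_i ], and R' = Σ_{i=1}^{L−1} (1/2)·log₂[(1 + 2^{−2C_i}·INR_i + SNR_i)/(1 + 2^{−2C_i}·INR_i + 2^{−2C_i}·SNR_i)] + min{ (1/2)·log₂(1 + SNR_L), C_L }. Then U − R' ≤ (1 + log₂3)·L/2 − 1/2. (This is the constant-gap result for per-base-station SIC without Wyner-Ziv coding for the Wyner model, Theorem 4 of the paper.) -/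
/-!
The cut-set bound is at most `∑ᵢ min (½ log (1 + SNRᵢ + INRᵢ), Cᵢ)`: cut exactly the users
whose backhaul is the bottleneck. For the last user this term is the rate of the better of
compress-and-forward and decode-and-forward, since `INR_L = 0`. For every other user, with
`t = 2^{-2Cᵢ}`, the SIC rate is `½ log ((1 + t·INR + SNR) / (1 + t·INR + t·SNR))`, and weak
interference `INR ≤ SNR` makes this ratio at least `min (1/t, 1 + SNR + INR) / 6`: so each of
the first `L - 1` users loses at most `½ log 6 = (1 + log 3)/2` bits.
-/

open Finset Real

theorem Finset.inf'_powerset_sum_sdiff_add_sum_le {ι M : Type*} [DecidableEq ι]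
    [AddCommMonoid M] [LinearOrder M] (s : Finset ι) (f g : ι → M) :
    s.powerset.inf' (powerset_nonempty s) (fun t => ∑ i ∈ s \ t, f i + ∑ i ∈ t, g i) ≤
      ∑ i ∈ s, min (f i) (g i) := by
  have hcut : ∑ i ∈ s \ s.filter (fun i => g i ≤ f i), f i
      + ∑ i ∈ s.filter (fun i => g i ≤ f i), g i = ∑ i ∈ s, min (f i) (g i) := by
    rw [← filter_not, add_comm, ← sum_ite]
    exact sum_congr rfl fun i _ => by
      split_ifs with h
      · exact (min_eq_right h).symm
      · exact (min_eq_left (le_of_not_ge h)).symm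
  exact hcut ▸ inf'_le _ (mem_powerset.2 (filter_subset _ _))

lemma min_le_six_mul_sic_ratio {a b t : ℝ} (hb : 0 ≤ b) (hba : b ≤ a) (ht : 0 < t) :
    min (1 / t) (1 + a + b) ≤ 6 * ((1 + t * b + a) / (1 + t * b + t * a)) := by
  have ha : 0 ≤ a := hb.trans hba
  have hd : 0 < 1 + t * b + t * a := by positivity
  have htb : t * b ≤ t * a := mul_le_mul_of_nonneg_left hba ht.le
  rcases le_or_gt (t * a) 1 with hta | hta
  -- the denominator is at most `3` and the numerator at least `(1 + a + b) / 2`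
  · refine (min_le_right _ _).trans ?_
    rw [← mul_div_assoc, le_div_iff₀ hd]
    nlinarith [mul_le_mul_of_nonneg_left (htb.trans hta) ha,
      mul_le_mul_of_nonneg_left (htb.trans hta) hb, mul_le_mul_of_nonneg_left hta ha,
      mul_le_mul_of_nonneg_left hta hb, mul_nonneg ht.le hb]
  -- the denominator is less than `3 t a` and the numerator exceeds `a`
  · refine (min_le_left _ _).trans ?_
    rw [← mul_div_assoc, div_le_div_iff₀ ht hd]
    nlinarith [mul_nonneg ht.le hb, mul_nonneg (mul_nonneg ht.le ht.le) hb, mul_nonneg ht.le ha]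

lemma min_half_logb_le_sic_rate_add {a b : ℝ} (c : ℝ) (hb : 0 ≤ b) (hba : b ≤ a) :
    min (1 / 2 * logb 2 (1 + a + b)) c ≤
      1 / 2 * logb 2 ((1 + (2 : ℝ) ^ (-(2 * c)) * b + a) /
        (1 + (2 : ℝ) ^ (-(2 * c)) * b + (2 : ℝ) ^ (-(2 * c)) * a)) + (1 + logb 2 3) / 2 := by
  have hc : c = 1 / 2 * logb 2 (1 / (2 : ℝ) ^ (-(2 * c))) := by
    rw [rpow_neg zero_le_two, div_inv_eq_mul, one_mul, logb_rpow zero_lt_two one_lt_two.ne']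
    ring
  set t : ℝ := (2 : ℝ) ^ (-(2 * c))
  have ht : 0 < t := by positivity
  have hY : 0 < 1 + a + b := by linarith
  have hmin : min (1 / 2 * logb 2 (1 + a + b)) c ≤ 1 / 2 * logb 2 (min (1 / t) (1 + a + b)) := by
    rcases min_choice (1 / t) (1 + a + b) with h | h
    · rw [h, ← hc]; exact min_le_right _ _
    · rw [h]; exact min_le_left _ _
  have ha : 0 ≤ a := hb.trans hba
  have hratio : 0 < (1 + t * b + a) / (1 + t * b + t * a) := by positivity
  have hlog6 : logb 2 6 = 1 + logb 2 3 := by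
    rw [show (6 : ℝ) = 2 * 3 by norm_num, logb_mul two_ne_zero three_ne_zero,
      logb_self_eq_one one_lt_two]
  calc min (1 / 2 * logb 2 (1 + a + b)) c
      ≤ 1 / 2 * logb 2 (min (1 / t) (1 + a + b)) := hmin
    _ ≤ 1 / 2 * logb 2 (6 * ((1 + t * b + a) / (1 + t * b + t * a))) := by
      gcongr 1 / 2 * ?_
      exact logb_le_logb_of_le one_lt_two (lt_min (by positivity) hY)
        (min_le_six_mul_sic_ratio hb hba ht)
    _ = 1 / 2 * logb 2 ((1 + t * b + a) / (1 + t * b + t * a)) + (1 + logb 2 3) / 2 := by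
      rw [logb_mul (by norm_num) hratio.ne', hlog6]; ring

theorem per_BS_SIC_no_WZ_constant_gap_Wyner_general (L : ℕ) (hL : 1 ≤ L)
    (SNR INR C : ℕ → ℝ)
    (hINR : ∀ i ∈ Finset.Ico 1 L, 0 ≤ INR i ∧ INR i ≤ SNR i)
    (hINRL : INR L = 0) :
    let U := (Finset.Icc 1 L).powerset.inf' (Finset.powerset_nonempty _)
      (fun s => (∑ i ∈ Finset.Icc 1 L \ s, (1 / 2) * Real.logb 2 (1 + SNR i + INR i))
        + ∑ i ∈ s, C i)
    let R' := (∑ i ∈ Finset.Ico 1 L,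
        (1 / 2) * Real.logb 2
          ((1 + (2 : ℝ) ^ (-(2 * C i)) * INR i + SNR i) /
            (1 + (2 : ℝ) ^ (-(2 * C i)) * INR i + (2 : ℝ) ^ (-(2 * C i)) * SNR i)))
      + min ((1 / 2) * Real.logb 2 (1 + SNR L)) (C L)
    U - R' ≤ (1 + Real.logb 2 3) * L / 2 - 1 / 2 := by
  intro U R'
  have hgap : U ≤ R' + (L - 1 : ℕ) * ((1 + logb 2 3) / 2) :=
    calc U ≤ ∑ i ∈ Icc 1 L, min (1 / 2 * logb 2 (1 + SNR i + INR i)) (C i) :=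
          inf'_powerset_sum_sdiff_add_sum_le _ _ _
      _ = ∑ i ∈ Ico 1 L, min (1 / 2 * logb 2 (1 + SNR i + INR i)) (C i)
            + min (1 / 2 * logb 2 (1 + SNR L)) (C L) := by
          rw [← Ico_add_one_right_eq_Icc, sum_Ico_succ_top hL, hINRL, add_zero]
      _ ≤ ∑ i ∈ Ico 1 L, (1 / 2 * logb 2 ((1 + (2 : ℝ) ^ (-(2 * C i)) * INR i + SNR i) /
              (1 + (2 : ℝ) ^ (-(2 * C i)) * INR i + (2 : ℝ) ^ (-(2 * C i)) * SNR i))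
              + (1 + logb 2 3) / 2) + min (1 / 2 * logb 2 (1 + SNR L)) (C L) := by
          gcongr with i hi
          exact min_half_logb_le_sic_rate_add (C i) (hINR i hi).1 (hINR i hi).2
      _ = R' + (L - 1 : ℕ) * ((1 + logb 2 3) / 2) := by
          rw [sum_add_distrib, sum_const, Nat.card_Ico, nsmul_eq_mul]; ring
  have hlog3 : 0 ≤ logb 2 3 := logb_nonneg one_lt_two (by norm_num)
  rw [Nat.cast_sub hL, Nat.cast_one] at hgap
  linarith

/-- Theorem 4 of the paper: in the Wyner soft-handoff model under weak interference
(`INR i ≤ SNR i`), the sum rate of the per-base-station SIC scheme without Wyner-Ziv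
coding (decoding from user `L` down to user `1`, with base-station `L` using the better
of compress-and-forward and decode-and-forward) is within `(1 + log₂ 3)·L/2 - 1/2` bits
of the cut-set upper bound on the sum capacity. -/
theorem per_BS_SIC_no_WZ_constant_gap_Wyner (L : ℕ) (hL : 1 ≤ L)
    (SNR INR C : ℕ → ℝ)
    (hSNR : ∀ i ∈ Finset.Icc 1 L, 0 ≤ SNR i)
    (hC : ∀ i ∈ Finset.Icc 1 L, 0 ≤ C i)
    (hINR : ∀ i ∈ Finset.Ico 1 L, 0 ≤ INR i ∧ INR i ≤ SNR i)
    (hINRL : INR L = 0) :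
    let U := (Finset.Icc 1 L).powerset.inf' (Finset.powerset_nonempty _)
      (fun s => (∑ i ∈ Finset.Icc 1 L \ s, (1 / 2) * Real.logb 2 (1 + SNR i + INR i))
        + ∑ i ∈ s, C i)
    let R' := (∑ i ∈ Finset.Ico 1 L,
        (1 / 2) * Real.logb 2
          ((1 + (2 : ℝ) ^ (-(2 * C i)) * INR i + SNR i) /
            (1 + (2 : ℝ) ^ (-(2 * C i)) * INR i + (2 : ℝ) ^ (-(2 * C i)) * SNR i)))
      + min ((1 / 2) * Real.logb 2 (1 + SNR L)) (C L)
    U - R' ≤ (1 + Real.logb 2 3) * L / 2 - 1 / 2 :=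
  per_BS_SIC_no_WZ_constant_gap_Wyner_general L hL SNR INR C hINR hINRL
end

section
/- Let S, I, C be real numbers with 0 ≤ I ≤ S, C ≥ 0, and S ≤ 2^{2C}. Then (1/2)·log₂(1 + S + I) − (1/2)·log₂[(1 + 2^{−2C}·I + S)/(1 + 2^{−2C}·I + 2^{−2C}·S)] ≤ (1 + log₂3)/2. -/
/-- Per-cell gap bound (no Wyner-Ziv case, cut through the wireless link): if the SNR
`S` satisfies `S ≤ 2^(2C)`, the cut-set term exceeds the achievable rate without
Wyner-Ziv coding by at most `(1 + log₂ 3)/2` bits. -/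
theorem per_cell_gap_no_WZ_wireless_cut (S I C : ℝ) (hI : 0 ≤ I) (hIS : I ≤ S)
    (hC : 0 ≤ C) (hS : S ≤ (2 : ℝ) ^ (2 * C)) :
    (1 / 2) * Real.logb 2 (1 + S + I)
        - (1 / 2) * Real.logb 2
            ((1 + (2 : ℝ) ^ (-(2 * C)) * I + S) /
              (1 + (2 : ℝ) ^ (-(2 * C)) * I + (2 : ℝ) ^ (-(2 * C)) * S))
      ≤ (1 + Real.logb 2 3) / 2 := by
  set ε : ℝ := (2 : ℝ) ^ (-(2 * C)) with hεdef
  have hε : 0 < ε := Real.rpow_pos_of_pos (by norm_num) _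
  have hS0 : 0 ≤ S := le_trans hI hIS
  have hεS : ε * S ≤ 1 := by
    have h := mul_le_mul_of_nonneg_left hS hε.le
    rwa [hεdef, ← Real.rpow_add (by norm_num : (0:ℝ) < 2), neg_add_cancel,
      Real.rpow_zero] at h
  have hεI : ε * I ≤ 1 := le_trans (by nlinarith) hεS
  have hεI0 : 0 ≤ ε * I := mul_nonneg hε.le hI
  have hεS0 : 0 ≤ ε * S := mul_nonneg hε.le hS0
  have hX : (0:ℝ) < 1 + S + I := by linarith
  have hA : (0:ℝ) < 1 + ε * I + S := by linarith
  have hB : (0:ℝ) < 1 + ε * I + ε * S := by linarith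
  have hkey : (1 + S + I) * (1 + ε * I + ε * S) ≤ 6 * (1 + ε * I + S) := by
    have h1 : 1 + S + I ≤ 2 * (1 + ε * I + S) := by linarith
    have h2 : 1 + ε * I + ε * S ≤ 3 := by linarith
    nlinarith
  have hlog : Real.logb 2 ((1 + S + I) * (1 + ε * I + ε * S)) ≤
      Real.logb 2 (6 * (1 + ε * I + S)) :=
    Real.logb_le_logb_of_le one_lt_two (by positivity) hkey
  rw [Real.logb_mul hX.ne' hB.ne', Real.logb_mul (by norm_num) hA.ne'] at hlog
  have h6 : Real.logb 2 6 = 1 + Real.logb 2 3 := by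
    rw [show (6:ℝ) = 2 * 3 by norm_num, Real.logb_mul (by norm_num) (by norm_num),
      Real.logb_self_eq_one one_lt_two]
  rw [Real.logb_div hA.ne' hB.ne']
  linarith
end

section
/- Let S, I, C be real numbers with 0 ≤ I ≤ S, C ≥ 0, and S ≤ 2^{2C}. Then (1/2)·log₂(1 + S + I) − (1/2)·log₂[(1 + S)/(1 + 2^{−2C}·S)] ≤ 1. -/
/-- Per-cell gap bound (Wyner-Ziv case, cut through the wireless link): if the SNR `S`
satisfies `S ≤ 2^(2C)`, the cut-set mutual-information term exceeds the achievable rate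
with Wyner-Ziv coding by at most one bit. -/
theorem per_cell_gap_WZ_wireless_cut (S I C : ℝ) (hI : 0 ≤ I) (hIS : I ≤ S)
    (hC : 0 ≤ C) (hS : S ≤ (2 : ℝ) ^ (2 * C)) :
    (1 / 2) * Real.logb 2 (1 + S + I)
        - (1 / 2) * Real.logb 2 ((1 + S) / (1 + (2 : ℝ) ^ (-(2 * C)) * S))
      ≤ 1 := by
  have hS0 : 0 ≤ S := le_trans hI hIS
  have hp : (0 : ℝ) < (2 : ℝ) ^ (-(2 * C)) := Real.rpow_pos_of_pos (by norm_num) _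
  have hd : (0 : ℝ) < 1 + (2 : ℝ) ^ (-(2 * C)) * S := by positivity
  have ha : (0 : ℝ) < 1 + S + I := by linarith
  have hb : (0 : ℝ) < 1 + S := by linarith
  have hpSle : (2 : ℝ) ^ (-(2 * C)) * S ≤ 1 := by
    have h2 : ((2 : ℝ) ^ (2 * C)) * (2 : ℝ) ^ (-(2 * C)) = 1 := by
      rw [← Real.rpow_add (by norm_num)]; simp
    calc (2 : ℝ) ^ (-(2 * C)) * S ≤ (2 : ℝ) ^ (-(2 * C)) * (2 : ℝ) ^ (2 * C) :=
          mul_le_mul_of_nonneg_left hS hp.le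
      _ = 1 := by rw [mul_comm]; exact h2
  have key : (1 + S + I) / ((1 + S) / (1 + (2 : ℝ) ^ (-(2 * C)) * S)) ≤ 4 := by
    rw [div_div_eq_mul_div, div_le_iff₀ hb]
    nlinarith [mul_nonneg hI hp.le, mul_nonneg hS0 hp.le,
      mul_nonneg hI (mul_nonneg hS0 hp.le)]
  have hlog : Real.logb 2 (1 + S + I)
      - Real.logb 2 ((1 + S) / (1 + (2 : ℝ) ^ (-(2 * C)) * S)) ≤ 2 := by
    rw [← Real.logb_div ha.ne' (by positivity)]
    calc Real.logb 2 ((1 + S + I) / ((1 + S) / (1 + (2 : ℝ) ^ (-(2 * C)) * S)))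
        ≤ Real.logb 2 4 := by
          apply Real.logb_le_logb_of_le (by norm_num) (by positivity) key
      _ = 2 := by
          rw [show (4 : ℝ) = 2 ^ (2 : ℝ) by
            rw [show ((2:ℝ):ℝ) = ((2:ℕ):ℝ) by norm_num, Real.rpow_natCast]; norm_num]
          rw [Real.logb_rpow] <;> norm_num
  linarith
end

section
/- Let L ≥ 1 be an integer, let S_1,…,S_L > 0 and C > 0 be real numbers, and suppose α ∈ ℝ is such that the allocation C_k* = max{ (1/2)·log₂(S_k) − α, 0 } satisfies Σ_{k=1}^{L} C_k* = C. Then for every allocation (C_1,…,C_L) with C_k ≥ 0 for all k and Σ_{k=1}^{L} C_k ≤ C, one has Σ_{k=1}^{L} (1/2)·log₂[(1 + S_k)/(1 + 2^{−2C_k}·S_k)] ≤ Σ_{k=1}^{L} (1/2)·log₂[(1 + S_k)/(1 + 2^{−2C_k*}·S_k)]. That is, the water-filling allocation C* maximizes the sum rate of the per-base-station SIC scheme subject to a total backhaul capacity constraint. (Theorem 5 of the paper.) -/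
/-!
The rate `c ↦ ½ log₂ ((1 + S) / (1 + 2^(-2c) S))` is concave, with slope `x / (1 + x)` at `c`,
where `x = 2^(-2c) S`. For the water-filling allocation `x_k = min (S_k) (2^(2α))`, so every
user with `C_k* > 0` has the common slope `λ = 2^(2α) / (1 + 2^(2α))` and every user with
`C_k* = 0` has slope at most `λ`. Hence `λ` is a Lagrange multiplier: the tangent lines bound the
sum rate of any feasible allocation by the optimal sum rate plus `λ (∑ C_k - C) ≤ 0`.
-/

open Real Finset

lemma mul_log_le_log_one_add_mul_sub_log_one_add {x u : ℝ} (hx : 0 < x) (hu : 0 < u) :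
    x / (1 + x) * log u ≤ log (1 + x * u) - log (1 + x) := by
  have h1x : 0 < 1 + x := by linarith
  have hconc := strictConcaveOn_log_Ioi.concaveOn.2 (Set.mem_Ioi.2 one_pos) (Set.mem_Ioi.2 hu)
    (by positivity : (0 : ℝ) ≤ 1 / (1 + x)) (by positivity : (0 : ℝ) ≤ x / (1 + x))
    (by field_simp)
  have hmid : 1 / (1 + x) * 1 + x / (1 + x) * u = (1 + x * u) / (1 + x) := by
    field_simp
  simp only [smul_eq_mul, hmid, log_div (by positivity : 1 + x * u ≠ 0) h1x.ne'] at hconc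
  simpa using hconc

lemma div_one_add_le_div_one_add {x y : ℝ} (hx : 0 ≤ x) (hxy : x ≤ y) :
    x / (1 + x) ≤ y / (1 + y) := by
  rw [div_le_div_iff₀ (by linarith) (by linarith)]
  linarith

lemma sum_le_sum_of_le_add_mul_sub {ι : Type*} (s : Finset ι) (f : ι → ℝ → ℝ) {x y : ι → ℝ}
    {μ : ℝ} (hμ : 0 ≤ μ) (hf : ∀ k ∈ s, f k (x k) ≤ f k (y k) + μ * (x k - y k))
    (hxy : ∑ k ∈ s, x k ≤ ∑ k ∈ s, y k) :
    ∑ k ∈ s, f k (x k) ≤ ∑ k ∈ s, f k (y k) :=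
  calc ∑ k ∈ s, f k (x k) ≤ ∑ k ∈ s, (f k (y k) + μ * (x k - y k)) := sum_le_sum hf
    _ = ∑ k ∈ s, f k (y k) + μ * (∑ k ∈ s, x k - ∑ k ∈ s, y k) := by
      rw [sum_add_distrib, ← mul_sum, sum_sub_distrib]
    _ ≤ ∑ k ∈ s, f k (y k) := by nlinarith

noncomputable def wzRate (S c : ℝ) : ℝ :=
  1 / 2 * logb 2 ((1 + S) / (1 + (2 : ℝ) ^ (-(2 * c)) * S))

lemma wzRate_eq {S : ℝ} (hS : 0 < S) (c : ℝ) :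
    wzRate S c = (log (1 + S) - log (1 + (2 : ℝ) ^ (-(2 * c)) * S)) / (2 * log 2) := by
  rw [wzRate, logb, log_div (by positivity) (by positivity)]
  ring

lemma wzRate_le_add_mul_sub {S : ℝ} (hS : 0 < S) (c c' : ℝ) :
    wzRate S c ≤ wzRate S c' +
      (2 : ℝ) ^ (-(2 * c')) * S / (1 + (2 : ℝ) ^ (-(2 * c')) * S) * (c - c') := by
  rw [wzRate_eq hS, wzRate_eq hS]
  set x := (2 : ℝ) ^ (-(2 * c')) * S
  have hxu : (2 : ℝ) ^ (-(2 * c)) * S = x * 2 ^ (2 * c' - 2 * c) := by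
    rw [mul_right_comm, ← rpow_add two_pos]; ring_nf
  have hconc := mul_log_le_log_one_add_mul_sub_log_one_add (by positivity : 0 < x)
    (rpow_pos_of_pos two_pos (2 * c' - 2 * c))
  rw [log_rpow two_pos] at hconc
  rw [hxu, ← sub_nonneg]
  have hgap : 0 ≤ (log (1 + x * 2 ^ (2 * c' - 2 * c)) - log (1 + x)
      - x / (1 + x) * ((2 * c' - 2 * c) * log 2)) / (2 * log 2) :=
    div_nonneg (by linarith) (by positivity [log_pos one_lt_two])
  convert hgap using 1
  field_simp
  ring

lemma two_rpow_neg_two_mul_half_logb_sub_mul {S : ℝ} (hS : 0 < S) (α : ℝ) :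
    (2 : ℝ) ^ (-(2 * (1 / 2 * logb 2 S - α))) * S = 2 ^ (2 * α) := by
  rw [show -(2 * (1 / 2 * logb 2 S - α)) = 2 * α - logb 2 S by ring,
    rpow_sub two_pos, rpow_logb two_pos (by norm_num) hS, div_mul_cancel₀ _ hS.ne']

lemma waterfilling_slope_mul_le {S α c cs : ℝ} (hS : 0 < S) (hc : 0 ≤ c)
    (hcs : cs = max (1 / 2 * logb 2 S - α) 0) :
    (2 : ℝ) ^ (-(2 * cs)) * S / (1 + (2 : ℝ) ^ (-(2 * cs)) * S) * (c - cs)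
      ≤ 2 ^ (2 * α) / (1 + 2 ^ (2 * α)) * (c - cs) := by
  rcases le_total (1 / 2 * logb 2 S - α) 0 with hdry | hwet
  · rw [hcs, max_eq_right hdry]
    have hST : S ≤ 2 ^ (2 * α) :=
      calc S = 2 ^ logb 2 S := (rpow_logb two_pos (by norm_num) hS).symm
        _ ≤ 2 ^ (2 * α) := rpow_le_rpow_of_exponent_le one_le_two (by linarith)
    simpa using mul_le_mul_of_nonneg_right (div_one_add_le_div_one_add hS.le hST) hc
  · rw [hcs, max_eq_left hwet, two_rpow_neg_two_mul_half_logb_sub_mul hS]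

theorem optimal_backhaul_allocation_general (L : ℕ) (S : Fin L → ℝ)
    (hS : ∀ k, 0 < S k) (C : ℝ) (α : ℝ) (Cstar : Fin L → ℝ)
    (hCstar : ∀ k, Cstar k = max ((1 / 2) * Real.logb 2 (S k) - α) 0)
    (hCsum : ∑ k, Cstar k = C) :
    ∀ Calloc : Fin L → ℝ, (∀ k, 0 ≤ Calloc k) → (∑ k, Calloc k ≤ C) →
      ∑ k, (1 / 2) * Real.logb 2 ((1 + S k) / (1 + (2 : ℝ) ^ (-(2 * Calloc k)) * S k))
        ≤ ∑ k, (1 / 2) * Real.logb 2 ((1 + S k) / (1 + (2 : ℝ) ^ (-(2 * Cstar k)) * S k)) := by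
  intro Calloc hCalloc hCallocSum
  show ∑ k, wzRate (S k) (Calloc k) ≤ ∑ k, wzRate (S k) (Cstar k)
  have hμ : (0 : ℝ) ≤ 2 ^ (2 * α) / (1 + 2 ^ (2 * α)) := by positivity
  refine sum_le_sum_of_le_add_mul_sub univ (fun k => wzRate (S k)) hμ (fun k _ => ?_)
    (hCsum ▸ hCallocSum)
  exact (wzRate_le_add_mul_sub (hS k) _ _).trans
    (add_le_add_right (waterfilling_slope_mul_le (hS k) (hCalloc k) (hCstar k)) _)

/-- Theorem 5 of the paper: the water-filling allocation
`C_k* = max ((1/2) log₂ (S_k) − α) 0`, with `α` chosen so that `∑ k, C_k* = C`,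
maximizes the sum rate of the per-base-station SIC scheme with Wyner-Ziv coding subject
to the total backhaul capacity constraint `∑ k, C_k ≤ C`. -/
theorem optimal_backhaul_allocation (L : ℕ) (hL : 1 ≤ L) (S : Fin L → ℝ)
    (hS : ∀ k, 0 < S k) (C : ℝ) (hC : 0 < C) (α : ℝ) (Cstar : Fin L → ℝ)
    (hCstar : ∀ k, Cstar k = max ((1 / 2) * Real.logb 2 (S k) - α) 0)
    (hCsum : ∑ k, Cstar k = C) :
    ∀ Calloc : Fin L → ℝ, (∀ k, 0 ≤ Calloc k) → (∑ k, Calloc k ≤ C) →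
      ∑ k, (1 / 2) * Real.logb 2 ((1 + S k) / (1 + (2 : ℝ) ^ (-(2 * Calloc k)) * S k))
        ≤ ∑ k, (1 / 2) * Real.logb 2 ((1 + S k) / (1 + (2 : ℝ) ^ (-(2 * Cstar k)) * S k)) :=
  optimal_backhaul_allocation_general L S hS C α Cstar hCstar hCsum
end
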